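/- The probability density f_L(ℓ) = 2ℓ/R² for 0 < ℓ ≤ R - ‖v₀‖ and f_L(ℓ) = (2ℓ/(πR²)) · arccos((‖v₀‖² - R² + ℓ²)/(2ℓ‖v₀‖)) for R - ‖v₀‖ < ℓ ≤ R + ‖v₀‖ integrates to 1, i.e., it is a valid probability density on (0, R + ‖v₀‖]. -/

import Mathlib

/-!
Write `d = ‖v₀‖`. For `R - d ≤ ℓ ≤ R + d` the area of the lens `B(0, R) ∩ B(v₀, ℓ)` is
`A(ℓ) = ℓ² arccos u + R² arccos w - ½ √(4d²ℓ² - (d² - R² + ℓ²)²)` with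
`u = (d² - R² + ℓ²)/(2ℓd)` and `w = (d² + R² - ℓ²)/(2dR)`, and `A'(ℓ) = 2ℓ arccos u`: the
derivatives of the last two terms cancel. At `ℓ = R - d` the small disk lies inside the big
one, `A = π(R - d)²`; at `ℓ = R + d` it covers it, `A = πR²`. Hence the density has mass
`(R - d)²/R²` on `(0, R - d]` and `1 - (R - d)²/R²` on `(R - d, R + d]`.
-/

open MeasureTheory Real Set

theorem HasDerivAt.arccos_div {a b : ℝ → ℝ} {a' b' x P : ℝ} (ha : HasDerivAt a a' x)
    (hb : HasDerivAt b b' x) (hb0 : 0 < b x) (hP : b x ^ 2 - a x ^ 2 = P) (hP0 : 0 < P) :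
    HasDerivAt (fun y => arccos (a y / b y)) (-(a' * b x - a x * b') / (b x * √P)) x := by
  have hsq : 1 - (a x / b x) ^ 2 = P / b x ^ 2 := by
    rw [← hP]; field_simp
  have hlt : 0 < 1 - (a x / b x) ^ 2 := by rw [hsq]; positivity
  have hne₁ : a x / b x ≠ -1 := by rintro h; rw [h] at hlt; norm_num at hlt
  have hne₂ : a x / b x ≠ 1 := by rintro h; rw [h] at hlt; norm_num at hlt
  refine ((hasDerivAt_arccos hne₁ hne₂).comp x (ha.div hb hb0.ne')).congr_deriv ?_
  rw [hsq, sqrt_div' _ (sq_nonneg _), sqrt_sq hb0.le]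
  have : √P ≠ 0 := (sqrt_pos.2 hP0).ne'
  field_simp

theorem lens_radicand_pos {R d x : ℝ} (hdR : d < R) (hx₁ : R - d < x) (hx₂ : x < R + d) :
    0 < 4 * d ^ 2 * x ^ 2 - (d ^ 2 - R ^ 2 + x ^ 2) ^ 2 := by
  have h : 4 * d ^ 2 * x ^ 2 - (d ^ 2 - R ^ 2 + x ^ 2) ^ 2
      = (R + d - x) * (R + d + x) * ((x - (R - d)) * (x + (R - d))) := by ring
  rw [h]
  have : 0 < R - d := by linarith
  apply mul_pos <;> apply mul_pos <;> linarith

noncomputable def lensArea (R d x : ℝ) : ℝ :=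
  x ^ 2 * arccos ((d ^ 2 - R ^ 2 + x ^ 2) / (2 * x * d))
    + R ^ 2 * arccos ((d ^ 2 + R ^ 2 - x ^ 2) / (2 * d * R))
    - √(4 * d ^ 2 * x ^ 2 - (d ^ 2 - R ^ 2 + x ^ 2) ^ 2) / 2

theorem hasDerivAt_lensArea {R d x : ℝ} (hd : 0 < d) (hdR : d < R) (hx₁ : R - d < x)
    (hx₂ : x < R + d) :
    HasDerivAt (lensArea R d) (2 * x * arccos ((d ^ 2 - R ^ 2 + x ^ 2) / (2 * x * d))) x := by
  set P := 4 * d ^ 2 * x ^ 2 - (d ^ 2 - R ^ 2 + x ^ 2) ^ 2 with hP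
  have hP0 : 0 < P := lens_radicand_pos hdR hx₁ hx₂
  have hx : 0 < x := by linarith
  have hR : 0 < R := by linarith
  have hu := HasDerivAt.arccos_div (a := fun y => d ^ 2 - R ^ 2 + y ^ 2) (b := fun y => 2 * y * d)
    (by simpa using (hasDerivAt_pow 2 x).const_add (d ^ 2 - R ^ 2))
    (by simpa using ((hasDerivAt_id x).const_mul 2).mul_const d) (by positivity)
    (by rw [hP]; ring) hP0
  have hw := HasDerivAt.arccos_div (a := fun y => d ^ 2 + R ^ 2 - y ^ 2) (b := fun _ => 2 * d * R)
    (by simpa using (hasDerivAt_pow 2 x).const_sub (d ^ 2 + R ^ 2)) (hasDerivAt_const x _)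
    (by positivity) (by rw [hP]; ring) hP0
  have hs : HasDerivAt (fun y => 4 * d ^ 2 * y ^ 2 - (d ^ 2 - R ^ 2 + y ^ 2) ^ 2)
      (4 * x * (d ^ 2 + R ^ 2 - x ^ 2)) x := by
    refine (((hasDerivAt_pow 2 x).const_mul (4 * d ^ 2)).fun_sub
      (((hasDerivAt_pow 2 x).const_add (d ^ 2 - R ^ 2)).fun_pow 2)).congr_deriv ?_
    push_cast
    ring
  refine ((((hasDerivAt_pow 2 x).mul hu).add (hw.const_mul (R ^ 2))).sub
    ((hs.sqrt hP0.ne').div_const 2)).congr_deriv ?_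
  have : √P ≠ 0 := (sqrt_pos.2 hP0).ne'
  simp only [← hP]
  field_simp
  ring

theorem continuousOn_lensArea {R d : ℝ} (hd : 0 < d) (hdR : d < R) :
    ContinuousOn (lensArea R d) (Icc (R - d) (R + d)) := by
  have hx : ∀ x ∈ Icc (R - d) (R + d), 2 * x * d ≠ 0 := fun x hx => by
    have : 0 < x := by linarith [hx.1]
    positivity
  unfold lensArea
  fun_prop (disch := assumption)

theorem continuousOn_two_mul_arccos {R d : ℝ} (hd : 0 < d) (hdR : d < R) :
    ContinuousOn (fun x => 2 * x * arccos ((d ^ 2 - R ^ 2 + x ^ 2) / (2 * x * d)))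
      (Icc (R - d) (R + d)) := by
  have hx : ∀ x ∈ Icc (R - d) (R + d), 2 * x * d ≠ 0 := fun x hx => by
    have : 0 < x := by linarith [hx.1]
    positivity
  fun_prop (disch := assumption)

theorem lensArea_sub_left {R d : ℝ} (hd : 0 < d) (hdR : d < R) :
    lensArea R d (R - d) = π * (R - d) ^ 2 := by
  have hRd : R - d ≠ 0 := by linarith
  have hR : R ≠ 0 := by linarith
  have hu : (d ^ 2 - R ^ 2 + (R - d) ^ 2) / (2 * (R - d) * d) = -1 := by
    field_simp; ring
  have hw : (d ^ 2 + R ^ 2 - (R - d) ^ 2) / (2 * d * R) = 1 := by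
    field_simp; ring
  have hP : 4 * d ^ 2 * (R - d) ^ 2 - (d ^ 2 - R ^ 2 + (R - d) ^ 2) ^ 2 = 0 := by ring
  simp only [lensArea, hu, hw, hP, arccos_neg_one, arccos_one, sqrt_zero]
  ring

theorem lensArea_add_right {R d : ℝ} (hd : 0 < d) (hdR : d < R) :
    lensArea R d (R + d) = π * R ^ 2 := by
  have hRd : R + d ≠ 0 := by linarith
  have hR : R ≠ 0 := by linarith
  have hu : (d ^ 2 - R ^ 2 + (R + d) ^ 2) / (2 * (R + d) * d) = 1 := by
    field_simp; ring
  have hw : (d ^ 2 + R ^ 2 - (R + d) ^ 2) / (2 * d * R) = -1 := by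
    field_simp; ring
  have hP : 4 * d ^ 2 * (R + d) ^ 2 - (d ^ 2 - R ^ 2 + (R + d) ^ 2) ^ 2 = 0 := by ring
  simp only [lensArea, hu, hw, hP, arccos_neg_one, arccos_one, sqrt_zero]
  ring

theorem integral_two_mul_arccos {R d : ℝ} (hd : 0 < d) (hdR : d < R) :
    ∫ x in (R - d)..(R + d), 2 * x * arccos ((d ^ 2 - R ^ 2 + x ^ 2) / (2 * x * d))
      = π * R ^ 2 - π * (R - d) ^ 2 := by
  have hle : R - d ≤ R + d := by linarith
  rw [intervalIntegral.integral_eq_sub_of_hasDerivAt_of_le hle (continuousOn_lensArea hd hdR)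
    (fun x hx => hasDerivAt_lensArea hd hdR hx.1 hx.2)
    ((continuousOn_two_mul_arccos hd hdR).intervalIntegrable_of_Icc hle),
    lensArea_add_right hd hdR, lensArea_sub_left hd hdR]

theorem setIntegral_Ioc_ite_le {E : Type*} [NormedAddCommGroup E] [NormedSpace ℝ E]
    {f g : ℝ → E} {a b c : ℝ} (hab : a ≤ b) (hbc : b ≤ c)
    (hf : IntervalIntegrable f volume a b) (hg : IntervalIntegrable g volume b c) :
    ∫ x in Ioc a c, (if x ≤ b then f x else g x) = (∫ x in a..b, f x) + ∫ x in b..c, g x := by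
  have hf' : EqOn (fun x => if x ≤ b then f x else g x) f (Ioc a b) :=
    fun x hx => if_pos hx.2
  have hg' : EqOn (fun x => if x ≤ b then f x else g x) g (Ioc b c) :=
    fun x hx => if_neg (not_le.2 hx.1)
  rw [← Ioc_union_Ioc_eq_Ioc hab hbc, setIntegral_union (Ioc_disjoint_Ioc_of_le le_rfl)
      measurableSet_Ioc (((intervalIntegrable_iff_integrableOn_Ioc_of_le hab).1 hf).congr_fun
        hf'.symm measurableSet_Ioc)
      (((intervalIntegrable_iff_integrableOn_Ioc_of_le hbc).1 hg).congr_fun hg'.symm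
        measurableSet_Ioc),
    setIntegral_congr_fun measurableSet_Ioc hf', setIntegral_congr_fun measurableSet_Ioc hg',
    intervalIntegral.integral_of_le hab, intervalIntegral.integral_of_le hbc]

theorem distance_density_integrates_to_one_general
    (R : ℝ) (v₀ : EuclideanSpace ℝ (Fin 2))
    (hv₀ : 0 < ‖v₀‖) (hv₀R : ‖v₀‖ < R) :
    ∫ ℓ in Ioc (0:ℝ) (R + ‖v₀‖),
        (if ℓ ≤ R - ‖v₀‖ then 2 * ℓ / R ^ 2
         else 2 * ℓ * Real.arccos ((‖v₀‖ ^ 2 - R ^ 2 + ℓ ^ 2) / (2 * ℓ * ‖v₀‖))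
                / (Real.pi * R ^ 2))
      = 1 := by
  set d := ‖v₀‖
  have hR : 0 < R := hv₀.trans hv₀R
  rw [setIntegral_Ioc_ite_le (by linarith) (by linarith)
      ((by fun_prop : Continuous fun ℓ : ℝ => 2 * ℓ / R ^ 2).intervalIntegrable _ _)
      (((continuousOn_two_mul_arccos hv₀ hv₀R).div_const _).intervalIntegrable_of_Icc
        (by linarith)),
    intervalIntegral.integral_div, intervalIntegral.integral_div,
    intervalIntegral.integral_const_mul, integral_id, integral_two_mul_arccos hv₀ hv₀R]
  field_simp
  ring

/-- The density `f_L(ℓ) = 2ℓ/R²` for `0 < ℓ ≤ R - ‖v₀‖`, and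
`f_L(ℓ) = (2ℓ/(πR²)) arccos((‖v₀‖² - R² + ℓ²)/(2ℓ‖v₀‖))` for
`R - ‖v₀‖ < ℓ ≤ R + ‖v₀‖`, integrates to `1` on `(0, R + ‖v₀‖]`. -/
theorem distance_density_integrates_to_one
    (R : ℝ) (hR : 0 < R) (v₀ : EuclideanSpace ℝ (Fin 2))
    (hv₀ : 0 < ‖v₀‖) (hv₀R : ‖v₀‖ < R) :
    ∫ ℓ in Ioc (0:ℝ) (R + ‖v₀‖),
        (if ℓ ≤ R - ‖v₀‖ then 2 * ℓ / R ^ 2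
         else 2 * ℓ * Real.arccos ((‖v₀‖ ^ 2 - R ^ 2 + ℓ ^ 2) / (2 * ℓ * ‖v₀‖))
                / (Real.pi * R ^ 2))
      = 1 :=
  distance_density_integrates_to_one_general R v₀ hv₀ hv₀R
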